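/- arXiv:0709.0125 — 5 statements merged into one kernel-verified Lean document; each statement's English description precedes it below -/
import Mathlib

section
/- Let F : ℝ² → ℝ² be defined by F(x, y) = (e^{2x} - y² + 3, 4e^{2x}y - y³). Then the determinant of the Jacobian of F equals 2e^{2x}(4e^{2x} + 5y²), which is strictly positive for all (x, y) ∈ ℝ², and yet F is not injective, since F(0, 2) = F(0, -2) = (0, 0). -/
/-- Gale–Nikaidô counterexample: positive Jacobian determinant but not injective. -/
theorem stmt_0 :
    (∀ x y : ℝ,
      (2 * Real.exp (2*x)) * (4 * Real.exp (2*x) - 3 * y^2)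
        - (-2*y) * (8 * Real.exp (2*x) * y)
        = 2 * Real.exp (2*x) * (4 * Real.exp (2*x) + 5 * y^2)
      ∧ 0 < 2 * Real.exp (2*x) * (4 * Real.exp (2*x) + 5 * y^2)) ∧
    (fun p : ℝ × ℝ =>
        (Real.exp (2*p.1) - p.2^2 + 3, 4 * Real.exp (2*p.1) * p.2 - p.2^3)) (0, 2)
      = (0, 0) ∧
    (fun p : ℝ × ℝ =>
        (Real.exp (2*p.1) - p.2^2 + 3, 4 * Real.exp (2*p.1) * p.2 - p.2^3)) (0, -2)
      = (0, 0) ∧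
    ¬ Function.Injective (fun p : ℝ × ℝ =>
        (Real.exp (2*p.1) - p.2^2 + 3, 4 * Real.exp (2*p.1) * p.2 - p.2^3)) := by
  have hval : ∀ y : ℝ, y = 2 ∨ y = -2 →
      (Real.exp (2*(0:ℝ)) - y^2 + 3, 4 * Real.exp (2*(0:ℝ)) * y - y^3) = ((0:ℝ), (0:ℝ)) := by
    rintro y (rfl|rfl) <;> simp [Real.exp_zero] <;> norm_num
  refine ⟨fun x y => ⟨by ring, ?_⟩, ?_, ?_, ?_⟩
  · have h := Real.exp_pos (2*x)
    positivity
  · simpa using hval 2 (Or.inl rfl)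
  · simpa using hval (-2) (Or.inr rfl)
  · intro hinj
    have := hinj (a₁ := ((0:ℝ), (2:ℝ))) (a₂ := ((0:ℝ), (-2:ℝ)))
      (by simp only; rw [hval 2 (Or.inl rfl), hval (-2) (Or.inr rfl)] <;> simp)
    norm_num at this
end

section
/- Let M be an n×n real matrix all of whose principal minors are strictly positive (a P-matrix). If y ∈ ℝⁿ satisfies M·y ≤ 0 componentwise and y ≥ 0 componentwise, then y = 0. -/
open Matrix

variable {ι : Type*} [Fintype ι] [DecidableEq ι]

/-- det of the matrix whose rows in `s` come from `M` and whose rows outside `s`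
are unit rows equals the principal minor of `M` on `s`. -/
lemma det_piecewise_one (M : Matrix ι ι ℝ) (s : Finset ι) :
    (Matrix.of (s.piecewise M (1 : Matrix ι ι ℝ))).det
      = (M.submatrix (fun i : s => (i : ι)) (fun j : s => (j : ι))).det := by
  classical
  let e : {i // i ∈ s} ⊕ {i // i ∉ s} ≃ ι := Equiv.sumCompl (· ∈ s)
  have h1 : ((Matrix.of (s.piecewise M (1 : Matrix ι ι ℝ))).submatrix e e).det
      = (Matrix.of (s.piecewise M (1 : Matrix ι ι ℝ))).det := det_submatrix_equiv_self e _
  rw [← h1]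
  have h2 : (Matrix.of (s.piecewise M (1 : Matrix ι ι ℝ))).submatrix e e
      = Matrix.fromBlocks
          (M.submatrix (fun i : s => (i : ι)) (fun j : s => (j : ι)))
          (M.submatrix (fun i : s => (i : ι)) (fun j : {i // i ∉ s} => (j : ι)))
          0 (1 : Matrix {i // i ∉ s} {i // i ∉ s} ℝ) := by
    ext i j
    cases i with
    | inl i =>
      cases j with
      | inl j =>
        simp [e, Finset.piecewise, i.2, Matrix.submatrix]
      | inr j =>
        simp [e, Finset.piecewise, i.2, Matrix.submatrix]
    | inr i =>
      cases j with
      | inl j =>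
        have hij : (i : ι) ≠ (j : ι) := by
          intro h
          exact i.2 (h ▸ j.2)
        simp [e, Finset.piecewise, i.2, Matrix.submatrix, Matrix.one_apply, hij]
      | inr j =>
        by_cases hij : (i : ι) = (j : ι)
        · have : i = j := Subtype.ext hij
          subst this
          simp [e, Finset.piecewise, i.2, Matrix.submatrix, Matrix.one_apply,
            Equiv.sumCompl_apply_inr]
        · have : i ≠ j := fun h => hij (congrArg Subtype.val h)
          simp [e, Finset.piecewise, i.2, Matrix.submatrix, Matrix.one_apply, hij, this]
  rw [h2, Matrix.det_fromBlocks_zero₂₁, Matrix.det_one, mul_one]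

lemma det_principal_pos (M : Matrix ι ι ℝ)
    (hP : ∀ S : Finset ι, S.Nonempty →
      0 < (M.submatrix (fun i : S => (i : ι)) (fun j : S => (j : ι))).det)
    (s : Finset ι) :
    0 < (M.submatrix (fun i : s => (i : ι)) (fun j : s => (j : ι))).det := by
  rcases s.eq_empty_or_nonempty with h | h
  · subst h
    haveI : IsEmpty {i : ι // i ∈ (∅ : Finset ι)} := by
      constructor; rintro ⟨i, hi⟩; exact absurd hi (Finset.notMem_empty i)
    rw [Matrix.det_isEmpty]; norm_num
  · exact hP s h

/-- A P-matrix plus a nonnegative diagonal has positive determinant. -/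
lemma det_add_diagonal_pos (M : Matrix ι ι ℝ)
    (hP : ∀ S : Finset ι, S.Nonempty →
      0 < (M.submatrix (fun i : S => (i : ι)) (fun j : S => (j : ι))).det)
    (d : ι → ℝ) (hd : ∀ i, 0 ≤ d i) :
    0 < (M + Matrix.diagonal d).det := by
  classical
  have hexp : (M + Matrix.diagonal d).det
      = ∑ s : Finset ι, (Matrix.of (s.piecewise M (Matrix.diagonal d))).det := by
    have := (Matrix.detRowAlternating (R := ℝ) (n := ι)).toMultilinearMap.map_add_univ
      (M : ι → ι → ℝ) (Matrix.diagonal d : ι → ι → ℝ)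
    exact this
  rw [hexp]
  have hterm : ∀ s : Finset ι, (Matrix.of (s.piecewise M (Matrix.diagonal d))).det
      = (∏ i ∈ sᶜ, d i)
        * (M.submatrix (fun i : s => (i : ι)) (fun j : s => (j : ι))).det := by
    intro s
    have hrw : s.piecewise M (Matrix.diagonal d)
        = Matrix.of fun i j => (if i ∈ s then 1 else d i) * (Matrix.of (s.piecewise M (1 : Matrix ι ι ℝ))) i j := by
      ext i j
      by_cases hi : i ∈ s
      · simp [Finset.piecewise, hi]
      · simp [Finset.piecewise, hi, Matrix.diagonal, Matrix.one_apply,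
          mul_ite, mul_one, mul_zero]
    rw [show Matrix.of (s.piecewise M (Matrix.diagonal d)) = _ from hrw, Matrix.det_mul_column, det_piecewise_one]
    congr 1
    rw [← Finset.prod_mul_prod_compl s]
    rw [Finset.prod_congr rfl (fun i hi => if_pos hi), Finset.prod_const_one, one_mul]
    exact Finset.prod_congr rfl (fun i hi => if_neg (Finset.mem_compl.mp hi))
  have hnn : ∀ s : Finset ι, 0 ≤ (Matrix.of (s.piecewise M (Matrix.diagonal d))).det := by
    intro s
    rw [hterm s]
    exact mul_nonneg (Finset.prod_nonneg fun i _ => hd i)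
      (le_of_lt (det_principal_pos M hP s))
  have huniv : 0 < (Matrix.of ((Finset.univ : Finset ι).piecewise M (Matrix.diagonal d))).det := by
    rw [hterm, Finset.compl_univ, Finset.prod_empty, one_mul]
    exact det_principal_pos M hP _
  exact Finset.sum_pos' (fun s _ => hnn s) ⟨Finset.univ, Finset.mem_univ _, huniv⟩

theorem stmt_3 {n : ℕ} (M : Matrix (Fin n) (Fin n) ℝ)
    (hP : ∀ S : Finset (Fin n), S.Nonempty →
      0 < (M.submatrix (fun i : S => (i : Fin n)) (fun j : S => (j : Fin n))).det)
    (y : Fin n → ℝ) (hMy : ∀ i, M.mulVec y i ≤ 0) (hy : ∀ i, 0 ≤ y i) :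
    y = 0 := by
  classical
  by_contra hy0
  -- support of y
  set S : Finset (Fin n) := Finset.univ.filter (fun i => y i ≠ 0) with hS
  have hSmem : ∀ i, i ∈ S ↔ y i ≠ 0 := by
    intro i; simp [hS]
  have hSne : S.Nonempty := by
    rcases Function.ne_iff.mp hy0 with ⟨i, hi⟩
    exact ⟨i, (hSmem i).mpr (by simpa using hi)⟩
  -- restricted matrix and vector
  set M' : Matrix S S ℝ :=
    M.submatrix (fun i : S => (i : Fin n)) (fun j : S => (j : Fin n)) with hM'
  set y' : S → ℝ := fun i => y i with hy'
  have hy'pos : ∀ i : S, 0 < y' i := by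
    intro i
    exact lt_of_le_of_ne (hy i) (Ne.symm ((hSmem i).mp i.2))
  -- restricted mulVec agrees
  have hMy' : ∀ i : S, M'.mulVec y' i ≤ 0 := by
    intro i
    have : M'.mulVec y' i = M.mulVec y i := by
      simp only [Matrix.mulVec, dotProduct, hM', Matrix.submatrix_apply, hy']
      rw [Finset.sum_coe_sort S (fun j => M (i : Fin n) j * y j)]
      refine Finset.sum_subset (Finset.subset_univ S) ?_
      intro j _ hj
      have : y j = 0 := by
        by_contra h
        exact hj ((hSmem j).mpr h)
      simp [this]
    rw [this]
    exact hMy i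
  -- principal minors of M' are positive
  have hP' : ∀ T : Finset S, T.Nonempty →
      0 < (M'.submatrix (fun i : T => (i : S)) (fun j : T => (j : S))).det := by
    intro T hT
    set T' : Finset (Fin n) := T.map ⟨fun i : S => (i : Fin n),
      fun a b h => Subtype.ext h⟩ with hT'
    have hT'ne : T'.Nonempty := hT.map
    let e : T ≃ {i // i ∈ T'} :=
      { toFun := fun i => ⟨((i : S) : Fin n), Finset.mem_map_of_mem _ i.2⟩
        invFun := fun i => ⟨⟨i, by
            rcases Finset.mem_map.mp i.2 with ⟨a, _, h⟩
            exact h ▸ a.2⟩, by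
            rcases Finset.mem_map.mp i.2 with ⟨a, ha, h⟩
            have : (⟨(i : Fin n), h ▸ a.2⟩ : S) = a := Subtype.ext h.symm
            rw [this]; exact ha⟩
        left_inv := fun i => by ext; rfl
        right_inv := fun i => by ext; rfl }
    have key : (M'.submatrix (fun i : T => (i : S)) (fun j : T => (j : S)))
        = (M.submatrix (fun i : T' => (i : Fin n)) (fun j : T' => (j : Fin n))).submatrix
            e e := by
      ext i j
      rfl
    rw [key, Matrix.det_submatrix_equiv_self]
    exact hP T' hT'ne
  -- build nonnegative diagonal
  set d : S → ℝ := fun i => -(M'.mulVec y' i) / y' i with hd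
  have hdnn : ∀ i, 0 ≤ d i := fun i =>
    div_nonneg (neg_nonneg.mpr (hMy' i)) (le_of_lt (hy'pos i))
  have hker : (M' + Matrix.diagonal d).mulVec y' = 0 := by
    funext i
    simp only [Matrix.add_mulVec, Matrix.mulVec_diagonal, Pi.add_apply, Pi.zero_apply, hd]
    rw [div_mul_cancel₀ _ (ne_of_gt (hy'pos i))]
    simp
  have hdet0 : (M' + Matrix.diagonal d).det = 0 := by
    rw [← Matrix.exists_mulVec_eq_zero_iff]
    refine ⟨y', ?_, hker⟩
    intro h
    rcases hSne with ⟨i, hi⟩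
    have := congrFun h ⟨i, hi⟩
    exact absurd this (ne_of_gt (hy'pos ⟨i, hi⟩))
  have := det_add_diagonal_pos M' hP' d hdnn
  rw [hdet0] at this
  exact lt_irrefl 0 this
end

section
/- Let P₁, P₂ : [0, T] → ℝ be continuous functions with P₁, P₂ ≥ 0, and let x : [0, T] → ℝ be differentiable with x(0) > 0 and x'(t) = −x(t)·P₁(t) + P₂(t) for all t. Then x(t) > 0 for all t ∈ [0, T]. -/
/-!
Multiplying by the integrating factor `exp (∫₀ᵗ P₁)` turns the equation into
`(x · exp (∫₀ᵗ P₁))' = P₂ · exp (∫₀ᵗ P₁) ≥ 0`, so `x(t) · exp (∫₀ᵗ P₁) ≥ x(0) > 0`.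
-/

open Set Real

namespace IntegratingFactor

variable {f : ℝ → ℝ} {a b : ℝ}

theorem continuousOn_primitive_Icc (hf : ContinuousOn f (Icc a b)) (hab : a ≤ b) :
    ContinuousOn (fun u => ∫ s in a..u, f s) (Icc a b) := by
  have hf' : ContinuousOn f (uIcc a b) := by rwa [uIcc_of_le hab]
  simpa only [uIcc_of_le hab] using
    intervalIntegral.continuousOn_primitive_interval (hf'.integrableOn_compact isCompact_uIcc)

theorem hasDerivAt_primitive_of_mem_Ioo (hf : ContinuousOn f (Icc a b)) {t : ℝ}
    (ht : t ∈ Ioo a b) : HasDerivAt (fun u => ∫ s in a..u, f s) (f t) t := by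
  have hIcc : Icc a b ∈ nhds t := Icc_mem_nhds ht.1 ht.2
  refine intervalIntegral.integral_hasDerivAt_right ?_
    ⟨Icc a b, hIcc, hf.aestronglyMeasurable measurableSet_Icc⟩ (hf.continuousAt hIcc)
  exact (hf.mono (uIcc_of_le ht.1.le ▸ Icc_subset_Icc_right ht.2.le)).intervalIntegrable

variable {x p q : ℝ → ℝ}

theorem monotoneOn_mul_exp_primitive (hab : a ≤ b) (hp : ContinuousOn p (Icc a b))
    (hq : ∀ t ∈ Ioo a b, 0 ≤ q t) (hx : ∀ t ∈ Icc a b, HasDerivAt x (-x t * p t + q t) t) :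
    MonotoneOn (fun t => x t * exp (∫ s in a..t, p s)) (Icc a b) := by
  have hxc : ContinuousOn x (Icc a b) := fun t ht => (hx t ht).continuousAt.continuousWithinAt
  have hderiv : ∀ t ∈ Ioo a b,
      HasDerivAt (fun t => x t * exp (∫ s in a..t, p s)) (q t * exp (∫ s in a..t, p s)) t := fun t ht =>
    ((hx t (Ioo_subset_Icc_self ht)).fun_mul
      (hasDerivAt_primitive_of_mem_Ioo hp ht).exp).congr_deriv (by ring)
  rw [← interior_Icc] at hderiv hq
  exact monotoneOn_of_hasDerivWithinAt_nonneg (convex_Icc a b)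
    (hxc.mul (continuous_exp.comp_continuousOn (continuousOn_primitive_Icc hp hab)))
    (fun t ht => (hderiv t ht).hasDerivWithinAt) fun t ht => mul_nonneg (hq t ht) (exp_pos _).le

theorem pos_of_hasDerivAt_eq_neg_mul_add (hp : ContinuousOn p (Icc a b))
    (hq : ∀ t ∈ Ioo a b, 0 ≤ q t) (hx : ∀ t ∈ Icc a b, HasDerivAt x (-x t * p t + q t) t)
    (ha : 0 < x a) : ∀ t ∈ Icc a b, 0 < x t := by
  intro t ht
  have hab : a ≤ b := ht.1.trans ht.2
  have hle : x a ≤ x t * exp (∫ s in a..t, p s) := by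
    simpa using monotoneOn_mul_exp_primitive hab hp hq hx (left_mem_Icc.2 hab) ht ht.1
  exact pos_of_mul_pos_left (ha.trans_le hle) (exp_pos _).le

end IntegratingFactor

theorem stmt_13_general (T : ℝ) (P1 P2 x : ℝ → ℝ)
    (hP1c : ContinuousOn P1 (Set.Icc 0 T))
    (hP2 : ∀ t ∈ Set.Icc 0 T, 0 ≤ P2 t)
    (hx0 : 0 < x 0)
    (hx : ∀ t ∈ Set.Icc 0 T, HasDerivAt x (-(x t) * P1 t + P2 t) t) :
    ∀ t ∈ Set.Icc 0 T, 0 < x t :=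
  IntegratingFactor.pos_of_hasDerivAt_eq_neg_mul_add hP1c
    (fun t ht => hP2 t (Set.Ioo_subset_Icc_self ht)) hx hx0

theorem stmt_13 (T : ℝ) (P1 P2 x : ℝ → ℝ)
    (hP1c : ContinuousOn P1 (Set.Icc 0 T)) (hP2c : ContinuousOn P2 (Set.Icc 0 T))
    (hP1 : ∀ t ∈ Set.Icc 0 T, 0 ≤ P1 t) (hP2 : ∀ t ∈ Set.Icc 0 T, 0 ≤ P2 t)
    (hx0 : 0 < x 0)
    (hx : ∀ t ∈ Set.Icc 0 T, HasDerivAt x (-(x t) * P1 t + P2 t) t) :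
    ∀ t ∈ Set.Icc 0 T, 0 < x t :=
  stmt_13_general T P1 P2 x hP1c hP2 hx0 hx
end

section
/- Let A be an n×n real matrix and suppose the diagonal entries of A are all strictly negative, and the off-diagonal entries satisfy: for every cyclic sequence of distinct indices i₁, i₂, …, i_N (N ≥ 2) with a_{i_{h+1} i_h} ≠ 0 for all h (indices cyclic), the product ∏_h a_{i_{h+1} i_h} is negative. Then every principal minor of −A is strictly positive, i.e., −A is a P-matrix. -/
open Equiv Finset

private lemma key_aux {n : ℕ} (A : Matrix (Fin n) (Fin n) ℝ)
    (hcyc : ∀ N : ℕ, ∀ i : Fin (N + 2) → Fin n, Function.Injective i →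
      (∀ h : Fin (N + 2), A (i (h + 1)) (i h) ≠ 0) →
      ∏ h : Fin (N + 2), A (i (h + 1)) (i h) < 0)
    {ι : Type} [Fintype ι] [DecidableEq ι]
    (f : ι → Fin n) (hf : Function.Injective f) (σ : Equiv.Perm ι) :
    0 ≤ ((Equiv.Perm.sign σ : ℤ) : ℝ) * ∏ i ∈ σ.support, (-A) (f (σ i)) (f i) := by
  induction σ using Equiv.Perm.cycle_induction_on with
  | base_one => simp
  | base_cycles c hc =>
      -- enumerate the cycle
      obtain ⟨N, hN⟩ : ∃ N, c.support.card = N + 2 := by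
        have := hc.two_le_card_support
        exact ⟨c.support.card - 2, by omega⟩
      obtain ⟨x, hx⟩ : c.support.Nonempty := Finset.card_pos.mp (by omega)
      have hco : c.IsCycleOn (c.support : Set ι) := by
        rw [Equiv.Perm.coe_support_eq_set_support]; exact hc.isCycleOn
      set e : Fin (N + 2) → ι := fun h => (c ^ (h : ℕ)) x with he
      have hmem : ∀ h, e h ∈ c.support := fun h =>
        Equiv.Perm.pow_apply_mem_support.mpr hx
      have hpow : ∀ a b : ℕ, (c ^ a) x = (c ^ b) x ↔ a ≡ b [MOD N + 2] := by
        intro a b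
        rw [hco.pow_apply_eq_pow_apply hx, hN]
      have hinj : Function.Injective e := by
        intro a b hab
        have := (hpow a b).mp hab
        have ha := a.isLt; have hb := b.isLt
        exact Fin.ext (by
          simpa [Nat.ModEq, Nat.mod_eq_of_lt ha, Nat.mod_eq_of_lt hb] using this)
      have hstep : ∀ h : Fin (N + 2), e (h + 1) = c (e h) := by
        intro h
        have h1 : ((h + 1 : Fin (N + 2)) : ℕ) = ((h : ℕ) + 1) % (N + 2) := by
          simp [Fin.add_def]
        have h2 : c (e h) = (c ^ ((h : ℕ) + 1)) x := by
          simp [he, pow_succ', Equiv.Perm.mul_apply]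
        rw [h2, he]
        simp only [h1]
        exact (hpow _ _).mpr (Nat.mod_modEq _ _)
      have hprod : ∀ g : ι → ι → ℝ,
          (∏ h : Fin (N + 2), g (c (e h)) (e h)) = ∏ i ∈ c.support, g (c i) i := by
        intro g
        refine Finset.prod_bij (fun h _ => e h) (fun h _ => hmem h) ?_ ?_ ?_
        · intro a _ b _ hab; exact hinj hab
        · intro y hy
          obtain ⟨k, hk, hky⟩ := hco.exists_pow_eq hx hy
          rw [hN] at hk
          exact ⟨⟨k, hk⟩, Finset.mem_univ _, hky⟩
        · intro a _; rfl
      have hsign : ((Equiv.Perm.sign c : ℤ) : ℝ) = -(-1) ^ (N + 2) := by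
        rw [hc.sign, hN]; push_cast; ring
      set P : ℝ := ∏ i ∈ c.support, A (f (c i)) (f i) with hP
      have hBprod : (∏ i ∈ c.support, (-A) (f (c i)) (f i))
          = (-1) ^ (N + 2) * P := by
        rw [← hN]
        calc ∏ i ∈ c.support, (-A) (f (c i)) (f i)
            = ∏ i ∈ c.support, (-1) * A (f (c i)) (f i) := by
              simp [neg_one_mul]
          _ = (-1) ^ c.support.card * P := by
              rw [Finset.prod_mul_distrib, Finset.prod_const]
      have hPle : P ≤ 0 := by
        by_cases hz : ∀ i ∈ c.support, A (f (c i)) (f i) ≠ 0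
        · have hP2 : P = ∏ h : Fin (N + 2), A (f (e (h + 1))) (f (e h)) := by
            rw [hP, ← hprod (fun a b => A (f a) (f b))]
            exact Finset.prod_congr rfl fun h _ => by rw [hstep]
          rw [hP2]
          exact le_of_lt (hcyc N (fun h => f (e h)) (hf.comp hinj)
            (fun h => by
              show A (f (e (h + 1))) (f (e h)) ≠ 0
              rw [hstep h]; exact hz _ (hmem h)))
        · push_neg at hz
          obtain ⟨i, hi, hi0⟩ := hz
          rw [hP, Finset.prod_eq_zero hi hi0]
      rw [hsign, hBprod]
      have hone : ((-1 : ℝ)) ^ (N + 2) * (-1) ^ (N + 2) = 1 := by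
        rw [← mul_pow]; norm_num
      have : -(-1 : ℝ) ^ (N + 2) * ((-1) ^ (N + 2) * P)
          = -(((-1 : ℝ) ^ (N + 2) * (-1) ^ (N + 2)) * P) := by ring
      rw [this, hone, one_mul]
      linarith
  | induction_disjoint σ τ hd hcσ ihσ ihτ =>
      rw [Equiv.Perm.sign_mul, hd.support_mul,
        Finset.prod_union hd.disjoint_support]
      have hσ : ∀ i ∈ σ.support, (-A) (f ((σ * τ) i)) (f i) = (-A) (f (σ i)) (f i) := by
        intro i hi
        have : τ i = i := Equiv.Perm.notMem_support.mp (hd.mem_imp hi)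
        rw [Equiv.Perm.mul_apply, this]
      have hτ : ∀ i ∈ τ.support, (-A) (f ((σ * τ) i)) (f i) = (-A) (f (τ i)) (f i) := by
        intro i hi
        have hmem : τ i ∈ τ.support := Equiv.Perm.apply_mem_support.mpr hi
        have : σ (τ i) = τ i := Equiv.Perm.notMem_support.mp (hd.symm.mem_imp hmem)
        rw [Equiv.Perm.mul_apply, this]
      rw [Finset.prod_congr rfl hσ, Finset.prod_congr rfl hτ]
      calc (0 : ℝ) ≤ (((Equiv.Perm.sign σ : ℤ) : ℝ) * ∏ i ∈ σ.support, (-A) (f (σ i)) (f i))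
          * (((Equiv.Perm.sign τ : ℤ) : ℝ) * ∏ i ∈ τ.support, (-A) (f (τ i)) (f i)) :=
            mul_nonneg ihσ ihτ
        _ = _ := by push_cast; ring

/-- If all diagonal entries of `A` are negative and every cycle of the directed graph of
`A` is negative, then `-A` is a P-matrix. -/
theorem stmt_14 {n : ℕ} (A : Matrix (Fin n) (Fin n) ℝ)
    (hdiag : ∀ i, A i i < 0)
    (hcyc : ∀ N : ℕ, ∀ i : Fin (N + 2) → Fin n, Function.Injective i →
      (∀ h : Fin (N + 2), A (i (h + 1)) (i h) ≠ 0) →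
      ∏ h : Fin (N + 2), A (i (h + 1)) (i h) < 0) :
    ∀ S : Finset (Fin n), S.Nonempty →
      0 < ((-A).submatrix (fun i : S => (i : Fin n)) (fun j : S => (j : Fin n))).det := by
  intro S _
  rw [Matrix.det_apply']
  apply Finset.sum_pos'
  · intro σ _
    simp only [Matrix.submatrix_apply]
    rw [← Finset.prod_mul_prod_compl σ.support (fun i => (-A) ((σ i : Fin n)) (i : Fin n))]
    have hcompl : ∀ i ∈ σ.supportᶜ, (-A) ((σ i : Fin n)) (i : Fin n)
        = (-A) (i : Fin n) (i : Fin n) := by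
      intro i hi
      rw [Equiv.Perm.notMem_support.mp (Finset.mem_compl.mp hi)]
    rw [Finset.prod_congr rfl hcompl]
    have h1 : (0 : ℝ) ≤ ((Equiv.Perm.sign σ : ℤ) : ℝ)
        * ∏ i ∈ σ.support, (-A) ((σ i : Fin n)) (i : Fin n) :=
      key_aux A hcyc (fun i : S => (i : Fin n)) Subtype.coe_injective σ
    have h2 : (0 : ℝ) ≤ ∏ i ∈ σ.supportᶜ, (-A) (i : Fin n) (i : Fin n) :=
      le_of_lt (Finset.prod_pos fun i _ => by
        have := hdiag (i : Fin n); simp only [Matrix.neg_apply]; linarith)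
    calc (0:ℝ) ≤ (((Equiv.Perm.sign σ : ℤ) : ℝ)
          * ∏ i ∈ σ.support, (-A) ((σ i : Fin n)) (i : Fin n))
          * ∏ i ∈ σ.supportᶜ, (-A) (i : Fin n) (i : Fin n) := mul_nonneg h1 h2
      _ = _ := by ring
  · refine ⟨1, Finset.mem_univ _, ?_⟩
    simp only [Equiv.Perm.sign_one, Matrix.submatrix_apply, Equiv.Perm.one_apply]
    push_cast
    rw [one_mul]
    exact Finset.prod_pos fun i _ => by
      have := hdiag (i : Fin n); simp only [Matrix.neg_apply]; linarith
end

section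
/- Let p(x) = Σ_{j=1}^m β_j·∏_{l=1}^n x_l^{c_{jl}} be a polynomial function on (ℝ_{>0})ⁿ, where each β_j is a nonzero real number, the exponent vectors c_j ∈ ℕⁿ are distinct, and there is a fixed index k such that: β_j < 0 if and only if c_{jk} > 0. Suppose at least one β_j is positive and at least one is negative. Then there exist points x, x' ∈ (ℝ_{>0})ⁿ with p(x) > 0 and p(x') < 0. -/
theorem stmt_16 {n m : ℕ} (β : Fin m → ℝ) (c : Fin m → Fin n → ℕ)
    (hβ : ∀ j, β j ≠ 0) (hc : Function.Injective c) (k : Fin n)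
    (hsign : ∀ j, β j < 0 ↔ 0 < c j k)
    (hpos : ∃ j, 0 < β j) (hneg : ∃ j, β j < 0) :
    (∃ x : Fin n → ℝ, (∀ l, 0 < x l) ∧ 0 < ∑ j, β j * ∏ l, x l ^ c j l) ∧
    (∃ x' : Fin n → ℝ, (∀ l, 0 < x' l) ∧ ∑ j, β j * ∏ l, x' l ^ c j l < 0) := by
  classical
  obtain ⟨j₀, hj₀⟩ := hpos
  obtain ⟨j₁, hj₁⟩ := hneg
  set sp := Finset.univ.filter (fun j : Fin m => c j k = 0) with hsp
  set sn := Finset.univ.filter (fun j : Fin m => ¬ c j k = 0) with hsn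
  set A := ∑ j ∈ sp, β j with hA
  set S := ∑ j ∈ sn, β j with hS
  have hmemA : ∀ j ∈ sp, 0 < β j := by
    intro j hj
    simp only [hsp, Finset.mem_filter] at hj
    rcases lt_trichotomy (β j) 0 with h | h | h
    · have := (hsign j).mp h; omega
    · exact absurd h (hβ j)
    · exact h
  have hmemS : ∀ j ∈ sn, β j < 0 := by
    intro j hj
    simp only [hsn, Finset.mem_filter] at hj
    exact (hsign j).mpr (by omega)
  have hApos : 0 < A := by
    apply Finset.sum_pos hmemA
    refine ⟨j₀, ?_⟩
    have h1 : ¬ 0 < c j₀ k := fun h => absurd ((hsign j₀).mpr h) (not_lt.mpr hj₀.le)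
    simp only [hsp, Finset.mem_filter, Finset.mem_univ, true_and]
    omega
  have hSneg : S < 0 := by
    apply Finset.sum_neg hmemS
    refine ⟨j₁, ?_⟩
    have h1 : 0 < c j₁ k := (hsign j₁).mp hj₁
    simp only [hsn, Finset.mem_filter, Finset.mem_univ, true_and]
    omega
  -- the key evaluation of the polynomial at x = (1,...,t,...,1)
  have hprod : ∀ (t : ℝ) (j : Fin m),
      (∏ l, (if l = k then t else 1) ^ c j l) = t ^ c j k := by
    intro t j
    rw [Finset.prod_eq_single k]
    · simp
    · intro b _ hb; simp [hb]
    · intro h; exact absurd (Finset.mem_univ k) h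
  have hsum : ∀ (t : ℝ),
      (∑ j, β j * ∏ l, (if l = k then t else 1) ^ c j l)
        = A + ∑ j ∈ sn, β j * t ^ c j k := by
    intro t
    have := Finset.sum_filter_add_sum_filter_not Finset.univ
      (fun j : Fin m => c j k = 0) (fun j => β j * t ^ c j k)
    calc (∑ j, β j * ∏ l, (if l = k then t else 1) ^ c j l)
        = ∑ j, β j * t ^ c j k := by
          refine Finset.sum_congr rfl fun j _ => by rw [hprod]
      _ = (∑ j ∈ sp, β j * t ^ c j k) + ∑ j ∈ sn, β j * t ^ c j k := this.symm
      _ = A + ∑ j ∈ sn, β j * t ^ c j k := by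
          congr 1
          refine Finset.sum_congr rfl fun j hj => ?_
          simp only [hsp, Finset.mem_filter] at hj
          rw [hj.2]; simp
  have hc1 : ∀ j ∈ sn, 1 ≤ c j k := by
    intro j hj
    simp only [hsn, Finset.mem_filter] at hj
    omega
  constructor
  · -- small t
    set t := min 1 (A / (2 * (-S))) with ht
    have htpos : 0 < t := lt_min one_pos (div_pos hApos (by linarith))
    refine ⟨fun l => if l = k then t else 1, fun l => by dsimp; split <;> norm_num [htpos], ?_⟩
    rw [hsum]
    have hb : ∀ j ∈ sn, β j * t ≤ β j * t ^ c j k := by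
      intro j hj
      have h1 : t ^ c j k ≤ t ^ 1 :=
        pow_le_pow_of_le_one htpos.le (min_le_left _ _) (hc1 j hj)
      rw [pow_one] at h1
      exact mul_le_mul_of_nonpos_left h1 (hmemS j hj).le
    have h2 : S * t ≤ ∑ j ∈ sn, β j * t ^ c j k := by
      rw [hS, Finset.sum_mul]
      exact Finset.sum_le_sum hb
    have h3 : t ≤ A / (2 * (-S)) := min_le_right _ _
    have h4 : t * (2 * (-S)) ≤ A := (le_div_iff₀ (by linarith)).mp h3
    nlinarith
  · -- large t
    set t := max 1 ((A + 1) / (-S)) with ht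
    have htpos : 0 < t := lt_of_lt_of_le one_pos (le_max_left _ _)
    refine ⟨fun l => if l = k then t else 1, fun l => by dsimp; split <;> norm_num [htpos], ?_⟩
    rw [hsum]
    have hb : ∀ j ∈ sn, β j * t ^ c j k ≤ β j * t := by
      intro j hj
      have h1 : t ^ 1 ≤ t ^ c j k :=
        pow_le_pow_right₀ (le_max_left _ _) (hc1 j hj)
      rw [pow_one] at h1
      exact mul_le_mul_of_nonpos_left h1 (hmemS j hj).le
    have h2 : (∑ j ∈ sn, β j * t ^ c j k) ≤ S * t := by
      rw [hS, Finset.sum_mul]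
      exact Finset.sum_le_sum hb
    have h3 : (A + 1) / (-S) ≤ t := le_max_right _ _
    have h4 : A + 1 ≤ t * (-S) := by
      rw [div_le_iff₀ (by linarith)] at h3
      linarith
    nlinarith
end
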